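/- arXiv:2103.11544 — 3 statements merged into one kernel-verified Lean document; each statement's English description precedes it below -/
import Mathlib

section
/- (Discrete sewing lemma) Let h = T/n with grid points t_j = jh for 0 ≤ j ≤ n, and let f be a real- (or vector-) valued function defined on pairs (t_j, t_k) with 0 ≤ j < k ≤ n. Suppose f_{t_j, t_{j+1}} = 0 for all j = 0, …, n−1, and that there exist constants μ > 1 and C₀ ≥ 0 such that ‖f_{t_j,t_l} − f_{t_j,t_k} − f_{t_k,t_l}‖ ≤ C₀ |t_l − t_j|^μ for all j < k < l. Then there exists a constant C depending only on μ such that ‖f_{t_j,t_k}‖ ≤ C·C₀·|t_k − t_j|^μ for all 0 ≤ j < k ≤ n. -/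
open Real

private lemma sewing_pow2 (μ : ℝ) (hμ : 1 < μ)
    {E : Type} [NormedAddCommGroup E] (n : ℕ) (h : ℝ) (f : ℕ → ℕ → E)
    (C₀ : ℝ) (hh : 0 < h) (hC : 0 ≤ C₀)
    (h1 : ∀ j < n, f j (j + 1) = 0)
    (h2 : ∀ j k l : ℕ, j < k → k < l → l ≤ n →
      ‖f j l - f j k - f k l‖ ≤ C₀ * ((l : ℝ) * h - (j : ℝ) * h) ^ μ) :
    ∀ a j : ℕ, j + 2 ^ a ≤ n →
      ‖f j (j + 2 ^ a)‖ ≤ (1 / (1 - (2:ℝ) ^ (1 - μ))) * C₀ * (((2:ℝ) ^ a) * h) ^ μ := by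
  set K : ℝ := 1 / (1 - (2:ℝ) ^ (1 - μ)) with hKdef
  have hb1 : (2:ℝ) ^ (1 - μ) < 1 :=
    Real.rpow_lt_one_of_one_lt_of_neg one_lt_two (by linarith)
  have hb0 : (0:ℝ) < (2:ℝ) ^ (1 - μ) := Real.rpow_pos_of_pos two_pos _
  have hKpos : 0 < K := by
    apply div_pos one_pos; linarith
  intro a
  induction a with
  | zero =>
    intro j hj
    have : f j (j + 2 ^ 0) = 0 := by
      simpa using h1 j (by omega)
    rw [this, norm_zero]
    have : (0:ℝ) ≤ (((2:ℝ) ^ 0) * h) ^ μ := by positivity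
    exact mul_nonneg (mul_nonneg hKpos.le hC) this
  | succ a ih =>
    intro j hj
    have h2a : 1 ≤ 2 ^ a := Nat.one_le_two_pow
    set p := j + 2 ^ a with hp
    have hsplit : j + 2 ^ (a + 1) = p + 2 ^ a := by
      simp only [hp, pow_succ]; omega
    have hjp : ‖f j p‖ ≤ K * C₀ * (((2:ℝ) ^ a) * h) ^ μ := ih j (by omega)
    have hpl : ‖f p (j + 2 ^ (a+1))‖ ≤ K * C₀ * (((2:ℝ) ^ a) * h) ^ μ := by
      rw [hsplit]; exact ih p (by omega)
    have hdef : ‖f j (j + 2^(a+1)) - f j p - f p (j + 2^(a+1))‖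
        ≤ C₀ * (((2:ℝ) ^ (a+1)) * h) ^ μ := by
      have := h2 j p (j + 2^(a+1)) (by omega) (by omega) hj
      have hcast : ((j + 2^(a+1) : ℕ) : ℝ) * h - (j : ℝ) * h = ((2:ℝ) ^ (a+1)) * h := by
        push_cast; ring
      rwa [hcast] at this
    have tri : ‖f j (j + 2^(a+1))‖ ≤
        ‖f j (j + 2^(a+1)) - f j p - f p (j + 2^(a+1))‖ + ‖f j p‖ + ‖f p (j + 2^(a+1))‖ := by
      have he : f j (j + 2^(a+1)) =
          (f j (j + 2^(a+1)) - f j p - f p (j + 2^(a+1))) + f j p + f p (j + 2^(a+1)) := by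
        abel
      conv_lhs => rw [he]
      refine (norm_add_le _ _).trans ?_
      have := norm_add_le (f j (j + 2^(a+1)) - f j p - f p (j + 2^(a+1))) (f j p)
      linarith
    -- arithmetic: (2^(a+1) h)^μ = 2^μ * (2^a h)^μ, and 2K + 2^μ = K * 2^μ
    have hxnn : (0:ℝ) ≤ ((2:ℝ) ^ a) * h := by positivity
    have hpow : (((2:ℝ) ^ (a+1)) * h) ^ μ = (2:ℝ) ^ μ * (((2:ℝ) ^ a) * h) ^ μ := by
      have : ((2:ℝ) ^ (a+1)) * h = 2 * (((2:ℝ) ^ a) * h) := by ring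
      rw [this, Real.mul_rpow (by norm_num) hxnn]
    have ht : (2:ℝ) ^ (1 - μ) = 2 / (2:ℝ) ^ μ := by
      rw [Real.rpow_sub two_pos, Real.rpow_one]
    have htpos : (0:ℝ) < (2:ℝ) ^ μ := Real.rpow_pos_of_pos two_pos _
    have hKs : K * (1 - (2:ℝ) ^ (1 - μ)) = 1 := by
      rw [hKdef]; exact one_div_mul_cancel (by linarith)
    have hst : (2:ℝ) ^ (1 - μ) * (2:ℝ) ^ μ = 2 := by
      rw [ht]; exact div_mul_cancel₀ 2 htpos.ne'
    have hKeq : 2 * K + (2:ℝ) ^ μ = K * (2:ℝ) ^ μ := by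
      linear_combination (-((2:ℝ) ^ μ)) * hKs - K * hst
    have hmono : (0:ℝ) ≤ (((2:ℝ) ^ a) * h) ^ μ := Real.rpow_nonneg hxnn _
    calc ‖f j (j + 2^(a+1))‖
        ≤ ‖f j (j + 2^(a+1)) - f j p - f p (j + 2^(a+1))‖ + ‖f j p‖ + ‖f p (j + 2^(a+1))‖ := tri
      _ ≤ C₀ * (((2:ℝ) ^ (a+1)) * h) ^ μ + K * C₀ * (((2:ℝ) ^ a) * h) ^ μ
            + K * C₀ * (((2:ℝ) ^ a) * h) ^ μ := by gcongr
      _ = K * C₀ * (((2:ℝ) ^ (a+1)) * h) ^ μ := by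
          rw [hpow]
          linear_combination (C₀ * (((2:ℝ) ^ a) * h) ^ μ) * hKeq

/-- Discrete sewing lemma on the uniform grid `t_j = j·h`: if `f` vanishes on adjacent
grid pairs and has superadditivity defect of order `μ > 1`, then `f` itself is of order `μ`,
with a constant depending only on `μ`. -/
theorem discrete_sewing_lemma (μ : ℝ) (hμ : 1 < μ) :
    ∃ C > 0, ∀ (E : Type) (_ : NormedAddCommGroup E) (n : ℕ) (h : ℝ) (f : ℕ → ℕ → E)
      (C₀ : ℝ), 0 < h → 0 ≤ C₀ →
      (∀ j < n, f j (j + 1) = 0) →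
      (∀ j k l : ℕ, j < k → k < l → l ≤ n →
        ‖f j l - f j k - f k l‖ ≤ C₀ * ((l : ℝ) * h - (j : ℝ) * h) ^ μ) →
      ∀ j k : ℕ, j < k → k ≤ n →
        ‖f j k‖ ≤ C * C₀ * ((k : ℝ) * h - (j : ℝ) * h) ^ μ := by
  set K : ℝ := 1 / (1 - (2:ℝ) ^ (1 - μ)) with hKdef
  set t : ℝ := (2:ℝ) ^ μ with htdef
  have hb1 : (2:ℝ) ^ (1 - μ) < 1 :=
    Real.rpow_lt_one_of_one_lt_of_neg one_lt_two (by linarith)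
  have hb0 : (0:ℝ) < (2:ℝ) ^ (1 - μ) := Real.rpow_pos_of_pos two_pos _
  have hKpos : 0 < K := by apply div_pos one_pos; linarith
  have ht1 : 1 < t := by
    rw [htdef]
    calc (1:ℝ) = (2:ℝ) ^ (0:ℝ) := by rw [Real.rpow_zero]
    _ < (2:ℝ) ^ μ := Real.rpow_lt_rpow_of_exponent_lt one_lt_two (by linarith)
  set D : ℝ := (K + 1) * t / (t - 1) with hDdef
  have hDpos : 0 < D := by
    apply div_pos (by nlinarith) (by linarith)
  have hKD : K ≤ D := by
    rw [hDdef, le_div_iff₀ (by linarith)]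
    nlinarith
  have htpos : (0:ℝ) < t := Real.rpow_pos_of_pos two_pos _
  have hD1 : D * (t - 1) = (K + 1) * t := by
    rw [hDdef]; exact div_mul_cancel₀ _ (by linarith : t - 1 ≠ 0)
  have hDeq : K + D / t + 1 = D := by
    have ht0 : t ≠ 0 := htpos.ne'
    have h4 : D / t * t = D := div_mul_cancel₀ _ ht0
    have h3 : (K + D / t + 1) * t = D * t := by linear_combination -hD1 + h4
    exact mul_right_cancel₀ ht0 h3
  refine ⟨D, hDpos, ?_⟩
  intro E instE n h f C₀ hh hC h1 h2
  letI : NormedAddCommGroup E := instE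
  -- main claim by strong induction on the gap m
  have main : ∀ m : ℕ, ∀ j k : ℕ, k - j = m → j < k → k ≤ n →
      ‖f j k‖ ≤ D * C₀ * ((m : ℝ) * h) ^ μ := by
    intro m
    induction m using Nat.strong_induction_on with
    | _ m ih =>
      intro j k hm hjk hkn
      have hm1 : 1 ≤ m := by omega
      set a := Nat.log 2 m with ha
      have ha1 : 2 ^ a ≤ m := Nat.pow_log_le_self 2 (by omega)
      have ha2 : m < 2 ^ (a + 1) := Nat.lt_pow_succ_log_self (by norm_num) m
      have hk : k = j + m := by omega
      have hmh : (0:ℝ) ≤ (m : ℝ) * h := by positivity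
      have hpow2m : ((2:ℝ) ^ a * h) ^ μ ≤ ((m : ℝ) * h) ^ μ := by
        apply Real.rpow_le_rpow (by positivity) ?_ (by linarith)
        have : ((2:ℝ) ^ a) ≤ (m : ℝ) := by exact_mod_cast ha1
        nlinarith
      by_cases hcase : m = 2 ^ a
      · -- pure power of two
        have hKa := sewing_pow2 μ hμ n h f C₀ hh hC h1 h2 a j (by omega)
        have h0 : (0:ℝ) ≤ (((2:ℝ) ^ a) * h) ^ μ := Real.rpow_nonneg (by positivity) _
        calc ‖f j k‖ = ‖f j (j + 2 ^ a)‖ := by rw [hk, hcase]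
          _ ≤ K * C₀ * (((2:ℝ) ^ a) * h) ^ μ := hKa
          _ ≤ D * C₀ * (((2:ℝ) ^ a) * h) ^ μ :=
              mul_le_mul_of_nonneg_right (mul_le_mul_of_nonneg_right hKD hC) h0
          _ = D * C₀ * ((m : ℝ) * h) ^ μ := by rw [hcase]; push_cast; ring
      · -- split off largest power of two
        set r := m - 2 ^ a with hr
        have hr1 : 1 ≤ r := by omega
        have hrm : 2 * r < m := by omega
        set p := j + 2 ^ a with hp
        have hpk : p < k := by omega
        have hpn : p ≤ n := by omega
        -- first piece
        have hjp : ‖f j p‖ ≤ K * C₀ * (((2:ℝ) ^ a) * h) ^ μ :=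
          sewing_pow2 μ hμ n h f C₀ hh hC h1 h2 a j (by omega)
        -- second piece by induction
        have hpk' : ‖f p k‖ ≤ D * C₀ * ((r : ℝ) * h) ^ μ :=
          ih r (by omega) p k (by omega) hpk hkn
        -- defect
        have hdef : ‖f j k - f j p - f p k‖ ≤ C₀ * ((m:ℝ) * h) ^ μ := by
          have := h2 j p k (by omega) hpk hkn
          have hcast : (k : ℝ) * h - (j : ℝ) * h = (m : ℝ) * h := by
            rw [hk]; push_cast; ring
          rwa [hcast] at this
        have tri : ‖f j k‖ ≤ ‖f j k - f j p - f p k‖ + ‖f j p‖ + ‖f p k‖ := by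
          have he : f j k = (f j k - f j p - f p k) + f j p + f p k := by abel
          conv_lhs => rw [he]
          refine (norm_add_le _ _).trans ?_
          have := norm_add_le (f j k - f j p - f p k) (f j p)
          linarith
        -- (r h)^μ ≤ (m h)^μ / t
        have hrh : ((r : ℝ) * h) ^ μ ≤ ((m : ℝ) * h) ^ μ / t := by
          have hle : (r : ℝ) * h ≤ ((m : ℝ) * h) / 2 := by
            have : (2:ℝ) * r ≤ (m:ℝ) := by exact_mod_cast hrm.le
            nlinarith
          calc ((r : ℝ) * h) ^ μ ≤ (((m : ℝ) * h) / 2) ^ μ :=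
                Real.rpow_le_rpow (by positivity) hle (by linarith)
            _ = ((m : ℝ) * h) ^ μ / t := by
                rw [Real.div_rpow hmh (by norm_num), htdef]
        have hmhp : (0:ℝ) ≤ ((m : ℝ) * h) ^ μ := Real.rpow_nonneg hmh _
        calc ‖f j k‖ ≤ ‖f j k - f j p - f p k‖ + ‖f j p‖ + ‖f p k‖ := tri
          _ ≤ C₀ * ((m:ℝ) * h) ^ μ + K * C₀ * (((2:ℝ) ^ a) * h) ^ μ
                + D * C₀ * ((r : ℝ) * h) ^ μ := by gcongr
          _ ≤ C₀ * ((m:ℝ) * h) ^ μ + K * C₀ * ((m:ℝ) * h) ^ μ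
                + D * C₀ * (((m : ℝ) * h) ^ μ / t) := by
              gcongr
          _ = (K + D / t + 1) * C₀ * ((m:ℝ) * h) ^ μ := by ring
          _ = D * C₀ * ((m:ℝ) * h) ^ μ := by rw [hDeq]
  intro j k hjk hkn
  have := main (k - j) j k rfl hjk hkn
  have hcast : (k : ℝ) * h - (j : ℝ) * h = ((k - j : ℕ) : ℝ) * h := by
    have : ((k - j : ℕ) : ℝ) = (k : ℝ) - (j : ℝ) := by
      push_cast [Nat.cast_sub hjk.le]; ring
    rw [this]; ring
  rw [hcast]
  exact this
end

section
/- Let B be a one-dimensional fractional Brownian motion with Hurst parameter H ∈ (0,1) and ΔB_l = B_{lh} − B_{(l−1)h} on a uniform grid. For every even positive integer m there exists a constant C = C(m), independent of j, k, h, such that ‖ Σ_{l=j+1}^{k} (ΔB_l)^m ‖_{L²(Ω)} ≤ C·h^{mH − 1}·|t_k − t_j|, where t_l = lh. -/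
/-!
By Cauchy–Schwarz, `(∑_{l=j+1}^k (ΔB_l)^m)^2 ≤ (k - j) ∑_{l=j+1}^k (ΔB_l)^{2m}`. Each increment
`ΔB_l` is a centred Gaussian with variance `h^{2H}`, so `E[(ΔB_l)^{2m}] = c_{2m} h^{2mH}` with
`c_{2m}` the `2m`-th standard Gaussian moment. Hence the `L²` norm of the sum is at most
`√c_{2m} (k - j) h^{mH} = √c_{2m} h^{mH-1} (t_k - t_j)`.
-/

open MeasureTheory ProbabilityTheory

/-- `B` is a fractional Brownian motion with Hurst parameter `H`: a measurable centered
Gaussian process with the fBm covariance function. -/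
def IsFractionalBM {Ω : Type*} [MeasurableSpace Ω] (P : Measure Ω) (H : ℝ)
    (B : Ω → ℝ → ℝ) : Prop :=
  (∀ t : ℝ, Measurable fun ω => B ω t) ∧
  (∀ (k : ℕ) (c : Fin k → ℝ) (ts : Fin k → ℝ), ∃ v : NNReal,
    Measure.map (fun ω => ∑ i, c i * B ω (ts i)) P = gaussianReal 0 v) ∧
  (∀ s t : ℝ, 0 ≤ s → 0 ≤ t →
    ∫ ω, B ω t * B ω s ∂P = (t ^ (2 * H) + s ^ (2 * H) - |t - s| ^ (2 * H)) / 2)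

open Finset
open scoped NNReal

namespace ProbabilityTheory

lemma integral_sq_gaussianReal_zero (v : ℝ≥0) : ∫ x, x ^ 2 ∂gaussianReal 0 v = v := by
  rw [← variance_of_integral_eq_zero aemeasurable_id' integral_id_gaussianReal,
    variance_fun_id_gaussianReal]

lemma integral_pow_gaussianReal_zero (v : ℝ≥0) (k : ℕ) :
    ∫ x, x ^ k ∂gaussianReal 0 v = √(v : ℝ) ^ k * ∫ x, x ^ k ∂gaussianReal 0 1 := by
  have hscale : (gaussianReal 0 1).map (√(v : ℝ) * ·) = gaussianReal 0 v := by
    rw [gaussianReal_map_const_mul, mul_zero, mul_one]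
    congr
    exact Real.sq_sqrt v.coe_nonneg
  rw [← hscale, integral_map (by fun_prop) (by fun_prop)]
  simp_rw [mul_pow]
  exact integral_const_mul _ _

variable {Ω : Type*} [MeasurableSpace Ω] {P : Measure Ω} {X : Ω → ℝ} {μ : ℝ} {v : ℝ≥0}

lemma HasLaw.integrable_pow_of_gaussianReal (hX : HasLaw X (gaussianReal μ v) P) (k : ℕ) :
    Integrable (fun ω => X ω ^ k) P := by
  have hint : Integrable (fun x : ℝ => x ^ k) (P.map X) := by
    rw [hX.map_eq]
    exact integrable_pow_of_mem_interior_integrableExpSet (X := id) (by simp) k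
  exact hint.comp_aemeasurable hX.aemeasurable

end ProbabilityTheory

lemma integral_sq_sum_le_card_mul_sum_integral_sq {α ι : Type*} [MeasurableSpace α]
    {μ : Measure α} (s : Finset ι) {f : ι → α → ℝ}
    (hf : ∀ i ∈ s, Integrable (fun x => f i x ^ 2) μ) :
    ∫ x, (∑ i ∈ s, f i x) ^ 2 ∂μ ≤ #s * ∑ i ∈ s, ∫ x, f i x ^ 2 ∂μ := by
  rw [← integral_finsetSum s hf, ← integral_const_mul]
  exact integral_mono_of_nonneg (ae_of_all _ fun x => sq_nonneg _)
    ((integrable_finsetSum s hf).const_mul _)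
    (ae_of_all _ fun x => sq_sum_le_card_mul_sum_sq)

namespace IsFractionalBM

variable {Ω : Type*} [MeasurableSpace Ω] {P : Measure Ω} {H : ℝ} {B : Ω → ℝ → ℝ}

lemma exists_hasLaw_sum (hB : IsFractionalBM P H B) {k : ℕ} (c ts : Fin k → ℝ) :
    ∃ v : ℝ≥0, HasLaw (fun ω => ∑ i, c i * B ω (ts i)) (gaussianReal 0 v) P := by
  obtain ⟨v, hv⟩ := hB.2.1 k c ts
  have hmeas : Measurable fun ω => ∑ i, c i * B ω (ts i) :=
    Finset.measurable_fun_sum _ fun i _ => (hB.1 (ts i)).const_mul (c i)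
  exact ⟨v, hmeas.aemeasurable, hv⟩

lemma exists_hasLaw_eval (hB : IsFractionalBM P H B) (t : ℝ) :
    ∃ v : ℝ≥0, HasLaw (fun ω => B ω t) (gaussianReal 0 v) P := by
  simpa using hB.exists_hasLaw_sum ![1] ![t]

lemma exists_hasLaw_sub (hB : IsFractionalBM P H B) (t s : ℝ) :
    ∃ v : ℝ≥0, HasLaw (fun ω => B ω t - B ω s) (gaussianReal 0 v) P := by
  simpa [Fin.sum_univ_two, ← sub_eq_add_neg] using hB.exists_hasLaw_sum ![1, -1] ![t, s]

lemma memLp_two_eval (hB : IsFractionalBM P H B) (t : ℝ) : MemLp (fun ω => B ω t) 2 P := by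
  obtain ⟨v, hv⟩ := hB.exists_hasLaw_eval t
  exact hv.hasGaussianLaw.memLp_two

lemma integral_sub_sq (hB : IsFractionalBM P H B) (hH : 0 < H) {s t : ℝ} (hs : 0 ≤ s)
    (ht : 0 ≤ t) : ∫ ω, (B ω t - B ω s) ^ 2 ∂P = |t - s| ^ (2 * H) := by
  have hprod (u r : ℝ) : Integrable (fun ω => B ω u * B ω r) P :=
    (hB.memLp_two_eval u).integrable_mul (hB.memLp_two_eval r)
  have htt := hprod t t
  have hts := hprod t s
  have hss := hprod s s
  have hexpand : (fun ω => (B ω t - B ω s) ^ 2)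
      = fun ω => B ω t * B ω t - 2 * (B ω t * B ω s) + B ω s * B ω s := by
    funext ω; ring
  rw [hexpand, integral_add (by fun_prop) hss, integral_sub htt (by fun_prop),
    integral_const_mul, hB.2.2 t t ht ht, hB.2.2 s t hs ht, hB.2.2 s s hs hs,
    sub_self, sub_self, abs_zero, Real.zero_rpow (by positivity)]
  ring

lemma hasLaw_sub (hB : IsFractionalBM P H B) (hH : 0 < H) {s t : ℝ} (hs : 0 ≤ s) (ht : 0 ≤ t) :
    HasLaw (fun ω => B ω t - B ω s) (gaussianReal 0 (|t - s| ^ (2 * H)).toNNReal) P := by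
  obtain ⟨v, hv⟩ := hB.exists_hasLaw_sub t s
  have hvar : (v : ℝ) = |t - s| ^ (2 * H) := by
    rw [← integral_sq_gaussianReal_zero, ← hB.integral_sub_sq hH hs ht,
      ← hv.integral_comp (f := fun x => x ^ 2) (by fun_prop)]
    rfl
  rwa [← hvar, Real.toNNReal_coe]

lemma integral_sub_pow (hB : IsFractionalBM P H B) (hH : 0 < H) {s t : ℝ} (hs : 0 ≤ s)
    (ht : 0 ≤ t) (k : ℕ) :
    ∫ ω, (B ω t - B ω s) ^ k ∂P = (|t - s| ^ H) ^ k * ∫ x, x ^ k ∂gaussianReal 0 1 := by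
  have hstd : √((|t - s| ^ (2 * H)).toNNReal : ℝ) = |t - s| ^ H := by
    rw [Real.coe_toNNReal _ (by positivity), mul_comm, Real.rpow_mul (abs_nonneg _),
      Real.rpow_two, Real.sqrt_sq (by positivity)]
  rw [← hstd, ← integral_pow_gaussianReal_zero,
    ← (hB.hasLaw_sub hH hs ht).integral_comp (f := fun x => x ^ k) (by fun_prop)]
  rfl

lemma integral_sq_sum_pow_increments_le (hB : IsFractionalBM P H B) (hH : 0 < H) {h : ℝ}
    (hh : 0 ≤ h) (m j k : ℕ) :
    ∫ ω, (∑ l ∈ Ioc j k, (B ω (l * h) - B ω ((l - 1) * h)) ^ m) ^ 2 ∂P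
      ≤ #(Ioc j k) ^ 2 * ((h ^ H) ^ (2 * m) * ∫ x, x ^ (2 * m) ∂gaussianReal 0 1) := by
  have hincr : ∀ l ∈ Ioc j k,
      Integrable (fun ω => ((B ω (l * h) - B ω ((l - 1) * h)) ^ m) ^ 2) P ∧
      ∫ ω, ((B ω (l * h) - B ω ((l - 1) * h)) ^ m) ^ 2 ∂P
        = (h ^ H) ^ (2 * m) * ∫ x, x ^ (2 * m) ∂gaussianReal 0 1 := by
    intro l hl
    have hl1 : (1 : ℝ) ≤ l := by exact_mod_cast (Nat.zero_le j).trans_lt (mem_Ioc.mp hl).1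
    have hs : 0 ≤ ((l : ℝ) - 1) * h := mul_nonneg (by linarith) hh
    have ht : 0 ≤ (l : ℝ) * h := by positivity
    have hstep : |(l : ℝ) * h - (l - 1) * h| = h := by
      rw [← sub_mul, sub_sub_cancel, one_mul, abs_of_nonneg hh]
    simp_rw [← pow_mul']
    exact ⟨(hB.hasLaw_sub hH hs ht).integrable_pow_of_gaussianReal _,
      by rw [hB.integral_sub_pow hH hs ht, hstep]⟩
  calc _ ≤ #(Ioc j k) * ∑ l ∈ Ioc j k,
        ∫ ω, ((B ω (l * h) - B ω ((l - 1) * h)) ^ m) ^ 2 ∂P :=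
        integral_sq_sum_le_card_mul_sum_integral_sq _ fun l hl => (hincr l hl).1
    _ = _ := by
        rw [sum_congr rfl fun l hl => (hincr l hl).2, sum_const, nsmul_eq_mul]
        ring

end IsFractionalBM

theorem fbm_even_power_increment_sum_general
    {Ω : Type*} [MeasurableSpace Ω] (P : Measure Ω)
    (H : ℝ) (hH0 : 0 < H) (B : Ω → ℝ → ℝ)
    (hB : IsFractionalBM P H B) (m : ℕ) :
    ∃ C > 0, ∀ (T : ℝ) (n : ℕ), 0 < T → 0 < n → ∀ j k : ℕ, j < k → k ≤ n →
      (∫ ω, (∑ l ∈ Finset.Ioc j k,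
          (B ω ((l : ℝ) * (T / n)) - B ω (((l : ℝ) - 1) * (T / n))) ^ m) ^ 2 ∂P)
            ^ (1 / 2 : ℝ)
        ≤ C * (T / n) ^ ((m : ℝ) * H - 1)
            * ((k : ℝ) * (T / n) - (j : ℝ) * (T / n)) := by
  set c := ∫ x, x ^ (2 * m) ∂gaussianReal 0 1
  have hc : c ≤ (√c + 1) ^ 2 := by
    have hc0 : 0 ≤ c := integral_nonneg fun x => (even_two_mul m).pow_nonneg x
    nlinarith [Real.sq_sqrt hc0, Real.sqrt_nonneg c]
  refine ⟨√c + 1, by positivity, fun T n hT hn j k hjk _ => ?_⟩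
  set h := T / n
  have hh : 0 < h := by positivity
  have hcard : (#(Ioc j k) : ℝ) = k - j := by rw [Nat.card_Ioc, Nat.cast_sub hjk.le]
  have hkj : (0 : ℝ) ≤ k - j := by rw [sub_nonneg]; exact_mod_cast hjk.le
  have hscale : h ^ ((m : ℝ) * H - 1) * (k * h - j * h) = (k - j) * (h ^ H) ^ m := by
    rw [Real.rpow_sub_one hh.ne', mul_comm (m : ℝ), Real.rpow_mul_natCast hh.le]
    field_simp
  rw [← Real.sqrt_eq_rpow, mul_assoc, hscale, Real.sqrt_le_left (by positivity)]
  calc _ ≤ (k - j) ^ 2 * ((h ^ H) ^ (2 * m) * c) := by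
        rw [← hcard]; exact hB.integral_sq_sum_pow_increments_le hH0 hh.le m j k
    _ = c * ((k - j) * (h ^ H) ^ m) ^ 2 := by ring
    _ ≤ (√c + 1) ^ 2 * ((k - j) * (h ^ H) ^ m) ^ 2 := by gcongr
    _ = _ := by ring

/-- Even-power increment sums of fBm: for even `m` there is `C = C(m)` independent of
`j`, `k`, `h` with `‖Σ_{l=j+1}^k (ΔB_l)^m‖_{L²} ≤ C·h^{mH−1}·|t_k − t_j|`. -/
theorem fbm_even_power_increment_sum
    {Ω : Type*} [MeasurableSpace Ω] (P : Measure Ω) [IsProbabilityMeasure P]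
    (H : ℝ) (hH0 : 0 < H) (hH1 : H < 1) (B : Ω → ℝ → ℝ)
    (hB : IsFractionalBM P H B) (m : ℕ) (hm : Even m) (hm1 : 1 ≤ m) :
    ∃ C > 0, ∀ (T : ℝ) (n : ℕ), 0 < T → 0 < n → ∀ j k : ℕ, j < k → k ≤ n →
      (∫ ω, (∑ l ∈ Finset.Ioc j k,
          (B ω ((l : ℝ) * (T / n)) - B ω (((l : ℝ) - 1) * (T / n))) ^ m) ^ 2 ∂P)
            ^ (1 / 2 : ℝ)
        ≤ C * (T / n) ^ ((m : ℝ) * H - 1)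
            * ((k : ℝ) * (T / n) - (j : ℝ) * (T / n)) :=
  fbm_even_power_increment_sum_general P H hH0 B hB m
end

section
/- For the modified Milstein scheme applied to dY = σ(Y)dB, the coefficients of the associated truncated stochastic modified equation with truncation number N = 3, determined by the backward-error iteration f_α = g_α − Σ_{i=2}^{|α|} (1/i!) Σ_{(k^{i,1},…,k^{i,i}) ∈ O^α_i} D_{k^{i,1}}⋯D_{k^{i,i−1}} f_{k^{i,i}}, are: f_α = σ_l for |α| = 1 with α_l = 1; f_α = 0 for all α with |α| = 2; and f_α = −(1/6) Σ_{α¹+α²+α³=α} [f''_{α¹} f_{α²} f_{α³} + f'_{α¹} f'_{α²} f_{α³}] for |α| = 3, where the sum is over multi-indices α¹, α², α³ each of weight 1 with α¹ + α² + α³ = α. -/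
open Finset

variable {m : ℕ}

/-- The differential operator `(D_v u)(y) = u'(y)·v(y)` acting on vector fields. -/
noncomputable def Dop (u v : EuclideanSpace ℝ (Fin m) → EuclideanSpace ℝ (Fin m)) :
    EuclideanSpace ℝ (Fin m) → EuclideanSpace ℝ (Fin m) :=
  fun y => fderiv ℝ u y (v y)

/-- The finite set of multi-indices `β ≤ α`. -/
def below {d : ℕ} (α : Fin d → ℕ) : Finset (Fin d → ℕ) :=
  Fintype.piFinset fun i => Finset.Iic (α i)

lemma mem_below {d : ℕ} {α β : Fin d → ℕ} : β ∈ below α ↔ ∀ i, β i ≤ α i := by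
  simp [below, Fintype.mem_piFinset]

lemma weight_one_single {d : ℕ} {β : Fin d → ℕ} (h : ∑ i, β i = 1) :
    ∃ l, β = Pi.single l 1 := by
  obtain ⟨i, -, hi⟩ := Finset.exists_ne_zero_of_sum_ne_zero (h ▸ one_ne_zero)
  have hle : β i ≤ 1 := h ▸ Finset.single_le_sum (f := β) (fun j _ => Nat.zero_le _) (mem_univ i)
  have hβi : β i = 1 := le_antisymm hle (Nat.one_le_iff_ne_zero.2 hi)
  refine ⟨i, funext fun j => ?_⟩
  rcases eq_or_ne j i with rfl | hji
  · simp [hβi]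
  · have hrest : ∑ j ∈ univ.erase i, β j = 0 := by
      have := Finset.add_sum_erase univ β (mem_univ i)
      omega
    have := (Finset.sum_eq_zero_iff).1 hrest j (by simp [hji])
    simp [this, Pi.single_apply, hji]

lemma single_ne_zero' {d : ℕ} (l : Fin d) : (Pi.single l 1 : Fin d → ℕ) ≠ 0 := by
  intro h
  have := congrFun h l
  simp at this

lemma single_inj' {d : ℕ} {l l' : Fin d} (h : (Pi.single l 1 : Fin d → ℕ) = Pi.single l' 1) :
    l = l' := by
  by_contra hne
  have := congrFun h l
  simp [Pi.single_apply, hne] at this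

lemma sub_weight {d : ℕ} {α β : Fin d → ℕ} (hle : ∀ i, β i ≤ α i) :
    ∑ i, (α - β) i + ∑ i, β i = ∑ i, α i := by
  rw [← Finset.sum_add_distrib]
  exact Finset.sum_congr rfl fun i _ => Nat.sub_add_cancel (hle i)

lemma nonzero_weight {d : ℕ} {β : Fin d → ℕ} (h : β ≠ 0) : 1 ≤ ∑ i, β i := by
  rcases Nat.eq_zero_or_pos (∑ i, β i) with h0 | h1
  · exact absurd (funext fun i => (Finset.sum_eq_zero_iff).1 h0 i (mem_univ i)) h
  · exact h1

lemma dop_dop (σ₁ σ₂ σ₃ : EuclideanSpace ℝ (Fin m) → EuclideanSpace ℝ (Fin m))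
    (h₁ : ContDiff ℝ (⊤ : ℕ∞) σ₁) (h₂ : ContDiff ℝ (⊤ : ℕ∞) σ₂) (y : EuclideanSpace ℝ (Fin m)) :
    Dop (Dop σ₁ σ₂) σ₃ y =
      fderiv ℝ (fderiv ℝ σ₁) y (σ₂ y) (σ₃ y) + fderiv ℝ σ₁ y (fderiv ℝ σ₂ y (σ₃ y)) := by
  have hd1 : DifferentiableAt ℝ (fderiv ℝ σ₁) y :=
    ((h₁.fderiv_right (m := 1) (WithTop.coe_le_coe.2 le_top)).differentiable one_ne_zero).differentiableAt
  have hd2 : DifferentiableAt ℝ σ₂ y := (h₂.differentiable (by simp)).differentiableAt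
  have hsym : IsSymmSndFDerivAt ℝ σ₁ y :=
    h₁.contDiffAt.isSymmSndFDerivAt (by rw [minSmoothness_of_isRCLikeNormedField]; exact WithTop.coe_le_coe.2 le_top)
  show fderiv ℝ (fun z => fderiv ℝ σ₁ z (σ₂ z)) y (σ₃ y) = _
  rw [fderiv_clm_apply hd1 hd2]
  simp only [ContinuousLinearMap.add_apply, ContinuousLinearMap.coe_comp', Function.comp_apply,
    ContinuousLinearMap.flip_apply]
  rw [hsym.eq (σ₃ y) (σ₂ y)]
  abel

/-- Coefficients of the truncated stochastic modified equation (truncation number `N = 3`)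
for the modified Milstein scheme: if `f` satisfies the backward-error iteration
`f_α = g_α − Σ_{i=2}^{|α|} (1/i!) Σ_{O^α_i} D_{k^{i,1}}⋯D_{k^{i,i−1}} f_{k^{i,i}}`
with `g_α = σ_l` for `|α| = 1` (`α_l = 1`), `g` the symmetrized Milstein coefficient for
`|α| = 2`, and `g_α = 0` for `|α| = 3`, then `f_α = 0` for `|α| = 2` and
`f_α = −(1/6) Σ_{α¹+α²+α³=α} [f''_{α¹} f_{α²} f_{α³} + f'_{α¹} f'_{α²} f_{α³}]`
for `|α| = 3`, the sum running over weight-one multi-indices `α¹, α², α³`. -/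
theorem modified_equation_coefficients
    (d : ℕ) (σ : Fin d → EuclideanSpace ℝ (Fin m) → EuclideanSpace ℝ (Fin m))
    (hσ : ∀ l, ContDiff ℝ (⊤ : ℕ∞) (σ l))
    (f : (Fin d → ℕ) → EuclideanSpace ℝ (Fin m) → EuclideanSpace ℝ (Fin m))
    (hf1 : ∀ l : Fin d, f (Pi.single l 1) = σ l)
    (hf2 : ∀ α : Fin d → ℕ, (∑ i, α i) = 2 →
      f α = fun y =>
        ((1 / 2 : ℝ) • ∑ l₁ : Fin d, ∑ l₂ : Fin d,
          if Pi.single l₁ 1 + Pi.single l₂ 1 = α then fderiv ℝ (σ l₁) y (σ l₂ y) else 0)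
        - (1 / 2 : ℝ) • ∑ β ∈ below α,
            if β ≠ 0 ∧ α - β ≠ 0 then Dop (f (α - β)) (f β) y else 0)
    (hf3 : ∀ α : Fin d → ℕ, (∑ i, α i) = 3 →
      f α = fun y =>
        - ((1 / 2 : ℝ) • ∑ β ∈ below α,
            if β ≠ 0 ∧ α - β ≠ 0 then Dop (f (α - β)) (f β) y else 0)
        - (1 / 6 : ℝ) • ∑ β ∈ below α, ∑ κ ∈ below (α - β),
            if β ≠ 0 ∧ κ ≠ 0 ∧ α - β - κ ≠ 0 then
              Dop (Dop (f (α - β - κ)) (f κ)) (f β) y else 0) :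
    (∀ α : Fin d → ℕ, (∑ i, α i) = 2 → ∀ y, f α y = 0) ∧
    (∀ α : Fin d → ℕ, (∑ i, α i) = 3 → ∀ y, f α y =
      -(1 / 6 : ℝ) • ∑ l₁ : Fin d, ∑ l₂ : Fin d, ∑ l₃ : Fin d,
        if Pi.single l₁ 1 + Pi.single l₂ 1 + Pi.single l₃ 1 = α then
          fderiv ℝ (fderiv ℝ (f (Pi.single l₁ 1))) y
              (f (Pi.single l₂ 1) y) (f (Pi.single l₃ 1) y)
            + fderiv ℝ (f (Pi.single l₁ 1)) y
                (fderiv ℝ (f (Pi.single l₂ 1)) y (f (Pi.single l₃ 1) y))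
        else 0) := by
  classical
  have h2 : ∀ α : Fin d → ℕ, (∑ i, α i) = 2 → ∀ y, f α y = 0 := by
    intro α hα y
    have step : ∀ β ∈ below α,
        (if β ≠ 0 ∧ α - β ≠ 0 then Dop (f (α - β)) (f β) y else 0)
        = ∑ l₁ : Fin d, ∑ l₂ : Fin d,
            if Pi.single l₁ 1 + Pi.single l₂ 1 = α ∧ β = Pi.single l₂ 1 then
              fderiv ℝ (σ l₁) y (σ l₂ y) else 0 := by
      intro β hβ
      have hle : ∀ i, β i ≤ α i := mem_below.1 hβ
      by_cases hP : β ≠ 0 ∧ α - β ≠ 0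
      · have w : ∑ i, (α - β) i + ∑ i, β i = 2 := by rw [sub_weight hle, hα]
        have w1 := nonzero_weight hP.1
        have w2 := nonzero_weight hP.2
        have wβ : ∑ i, β i = 1 := by omega
        have wαβ : ∑ i, (α - β) i = 1 := by omega
        obtain ⟨l₂₀, hl₂₀⟩ := weight_one_single wβ
        obtain ⟨l₁₀, hl₁₀⟩ := weight_one_single wαβ
        have hrec : Pi.single l₁₀ 1 + Pi.single l₂₀ 1 = α := by
          rw [← hl₁₀, ← hl₂₀]
          funext i
          simp only [Pi.add_apply, Pi.sub_apply]
          exact Nat.sub_add_cancel (hle i)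
        rw [if_pos hP]
        rw [Finset.sum_eq_single_of_mem l₁₀ (mem_univ _), Finset.sum_eq_single_of_mem l₂₀ (mem_univ _)]
        · rw [if_pos ⟨hrec, hl₂₀⟩, Dop, hl₁₀, hl₂₀, hf1, hf1]
        · intro b _ hb
          rw [if_neg]
          rintro ⟨-, hb'⟩
          exact hb (single_inj' (hl₂₀.symm.trans hb')).symm
        · intro b _ hb
          apply Finset.sum_eq_zero
          intro l₂ _
          rw [if_neg]
          rintro ⟨hc, hb'⟩
          apply hb
          have h' : Pi.single b 1 = (Pi.single l₁₀ 1 : Fin d → ℕ) := by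
            funext i
            have h1 := congrFun hc i
            have h2' := congrFun hrec i
            have h3 := congrFun hb' i
            have h4 := congrFun hl₂₀ i
            simp only [Pi.add_apply] at h1 h2'
            omega
          exact single_inj' h'
      · rw [if_neg hP]
        symm
        apply Finset.sum_eq_zero
        intro l₁ _
        apply Finset.sum_eq_zero
        intro l₂ _
        rw [if_neg]
        rintro ⟨hc, rfl⟩
        refine hP ⟨single_ne_zero' l₂, ?_⟩
        have : α - Pi.single l₂ 1 = (Pi.single l₁ 1 : Fin d → ℕ) := by
          funext i
          have h1 := congrFun hc i
          simp only [Pi.add_apply] at h1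
          simp only [Pi.sub_apply]
          omega
        rw [this]
        exact single_ne_zero' l₁
    have key : (∑ β ∈ below α,
        if β ≠ 0 ∧ α - β ≠ 0 then Dop (f (α - β)) (f β) y else 0)
        = ∑ l₁ : Fin d, ∑ l₂ : Fin d,
            if Pi.single l₁ 1 + Pi.single l₂ 1 = α then fderiv ℝ (σ l₁) y (σ l₂ y) else 0 := by
      rw [Finset.sum_congr rfl step, Finset.sum_comm]
      refine Finset.sum_congr rfl fun l₁ _ => ?_
      rw [Finset.sum_comm]
      refine Finset.sum_congr rfl fun l₂ _ => ?_
      by_cases hc : Pi.single l₁ 1 + Pi.single l₂ 1 = α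
      · rw [if_pos hc]
        have hmem : (Pi.single l₂ 1 : Fin d → ℕ) ∈ below α := by
          refine mem_below.2 fun i => ?_
          have h1 := congrFun hc i
          simp only [Pi.add_apply] at h1
          omega
        rw [Finset.sum_eq_single_of_mem (Pi.single l₂ 1) hmem]
        · rw [if_pos ⟨hc, rfl⟩]
        · intro b _ hb
          rw [if_neg]
          rintro ⟨-, rfl⟩
          exact hb rfl
      · rw [if_neg hc]
        apply Finset.sum_eq_zero
        intro b _
        rw [if_neg]
        rintro ⟨h, -⟩
        exact hc h
    simp only [hf2 α hα, key, sub_self]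
  refine ⟨h2, ?_⟩
  intro α hα y
  have first : (∑ β ∈ below α,
      if β ≠ 0 ∧ α - β ≠ 0 then Dop (f (α - β)) (f β) y else 0) = 0 := by
    apply Finset.sum_eq_zero
    intro β hβ
    by_cases hP : β ≠ 0 ∧ α - β ≠ 0
    · rw [if_pos hP]
      have hle := mem_below.1 hβ
      have w : ∑ i, (α - β) i + ∑ i, β i = 3 := by rw [sub_weight hle, hα]
      have w1 := nonzero_weight hP.1
      have w2 := nonzero_weight hP.2
      rcases (by omega : ∑ i, β i = 2 ∨ ∑ i, (α - β) i = 2) with h | h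
      · have hz : f β = fun _ => 0 := funext (h2 β h)
        simp [Dop, hz]
      · have hz : f (α - β) = fun _ => 0 := funext (h2 _ h)
        simp [Dop, hz]
    · rw [if_neg hP]
  -- the triple sum identity
  have step2 : ∀ β ∈ below α, ∀ κ ∈ below (α - β),
      (if β ≠ 0 ∧ κ ≠ 0 ∧ α - β - κ ≠ 0 then
          Dop (Dop (f (α - β - κ)) (f κ)) (f β) y else 0)
      = ∑ l₁ : Fin d, ∑ l₂ : Fin d, ∑ l₃ : Fin d,
          if Pi.single l₁ 1 + Pi.single l₂ 1 + Pi.single l₃ 1 = α ∧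
              β = Pi.single l₃ 1 ∧ κ = Pi.single l₂ 1 then
            fderiv ℝ (fderiv ℝ (σ l₁)) y (σ l₂ y) (σ l₃ y)
              + fderiv ℝ (σ l₁) y (fderiv ℝ (σ l₂) y (σ l₃ y))
          else 0 := by
    intro β hβ κ hκ
    have hleβ : ∀ i, β i ≤ α i := mem_below.1 hβ
    have hleκ : ∀ i, κ i ≤ (α - β) i := mem_below.1 hκ
    by_cases hQ : β ≠ 0 ∧ κ ≠ 0 ∧ α - β - κ ≠ 0
    · have w : ∑ i, (α - β) i + ∑ i, β i = 3 := by rw [sub_weight hleβ, hα]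
      have w' : ∑ i, (α - β - κ) i + ∑ i, κ i = ∑ i, (α - β) i := sub_weight hleκ
      have w1 := nonzero_weight hQ.1
      have w2 := nonzero_weight hQ.2.1
      have w3 := nonzero_weight hQ.2.2
      have wβ : ∑ i, β i = 1 := by omega
      have wκ : ∑ i, κ i = 1 := by omega
      have wγ : ∑ i, (α - β - κ) i = 1 := by omega
      obtain ⟨l₃₀, hl₃₀⟩ := weight_one_single wβ
      obtain ⟨l₂₀, hl₂₀⟩ := weight_one_single wκ
      obtain ⟨l₁₀, hl₁₀⟩ := weight_one_single wγ
      have hrec : Pi.single l₁₀ 1 + Pi.single l₂₀ 1 + Pi.single l₃₀ 1 = α := by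
        rw [← hl₁₀, ← hl₂₀, ← hl₃₀]
        funext i
        have h1 := hleβ i
        have h2' := hleκ i
        simp only [Pi.sub_apply] at h2' ⊢
        simp only [Pi.add_apply, Pi.sub_apply]
        omega
      rw [if_pos hQ]
      rw [Finset.sum_eq_single_of_mem l₁₀ (mem_univ _),
        Finset.sum_eq_single_of_mem l₂₀ (mem_univ _),
        Finset.sum_eq_single_of_mem l₃₀ (mem_univ _)]
      · rw [if_pos ⟨hrec, hl₃₀, hl₂₀⟩, hl₁₀, hl₂₀, hl₃₀, hf1, hf1, hf1]
        exact dop_dop _ _ _ (hσ l₁₀) (hσ l₂₀) y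
      · intro b _ hb
        rw [if_neg]
        rintro ⟨-, hb', -⟩
        exact hb (single_inj' (hl₃₀.symm.trans hb')).symm
      · intro b _ hb
        apply Finset.sum_eq_zero
        intro l₃ _
        rw [if_neg]
        rintro ⟨-, -, hb'⟩
        exact hb (single_inj' (hl₂₀.symm.trans hb')).symm
      · intro b _ hb
        apply Finset.sum_eq_zero
        intro l₂ _
        apply Finset.sum_eq_zero
        intro l₃ _
        rw [if_neg]
        rintro ⟨hc, h3, h2''⟩
        apply hb
        refine single_inj' (funext fun i => ?_)
        have e1 := congrFun hc i
        have e2 := congrFun hrec i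
        have e3 := congrFun h3 i
        have e4 := congrFun h2'' i
        have e5 := congrFun hl₃₀ i
        have e6 := congrFun hl₂₀ i
        simp only [Pi.add_apply] at e1 e2
        omega
    · rw [if_neg hQ]
      symm
      apply Finset.sum_eq_zero
      intro l₁ _
      apply Finset.sum_eq_zero
      intro l₂ _
      apply Finset.sum_eq_zero
      intro l₃ _
      rw [if_neg]
      rintro ⟨hc, rfl, rfl⟩
      refine hQ ⟨single_ne_zero' l₃, single_ne_zero' l₂, ?_⟩
      have : α - Pi.single l₃ 1 - Pi.single l₂ 1 = (Pi.single l₁ 1 : Fin d → ℕ) := by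
        funext i
        have h1 := congrFun hc i
        simp only [Pi.add_apply] at h1
        simp only [Pi.sub_apply]
        omega
      rw [this]
      exact single_ne_zero' l₁
  have key3 : (∑ β ∈ below α, ∑ κ ∈ below (α - β),
      if β ≠ 0 ∧ κ ≠ 0 ∧ α - β - κ ≠ 0 then
        Dop (Dop (f (α - β - κ)) (f κ)) (f β) y else 0)
      = ∑ l₁ : Fin d, ∑ l₂ : Fin d, ∑ l₃ : Fin d,
          if Pi.single l₁ 1 + Pi.single l₂ 1 + Pi.single l₃ 1 = α then
            fderiv ℝ (fderiv ℝ (σ l₁)) y (σ l₂ y) (σ l₃ y)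
              + fderiv ℝ (σ l₁) y (fderiv ℝ (σ l₂) y (σ l₃ y))
          else 0 := by
    calc
      _ = ∑ β ∈ below α, ∑ κ ∈ below (α - β), ∑ l₁ : Fin d, ∑ l₂ : Fin d, ∑ l₃ : Fin d,
          if Pi.single l₁ 1 + Pi.single l₂ 1 + Pi.single l₃ 1 = α ∧
              β = Pi.single l₃ 1 ∧ κ = Pi.single l₂ 1 then
            fderiv ℝ (fderiv ℝ (σ l₁)) y (σ l₂ y) (σ l₃ y)
              + fderiv ℝ (σ l₁) y (fderiv ℝ (σ l₂) y (σ l₃ y))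
          else 0 :=
        Finset.sum_congr rfl fun β hβ => Finset.sum_congr rfl fun κ hκ => step2 β hβ κ hκ
      _ = ∑ l₁ : Fin d, ∑ l₂ : Fin d, ∑ l₃ : Fin d, ∑ β ∈ below α, ∑ κ ∈ below (α - β),
          if Pi.single l₁ 1 + Pi.single l₂ 1 + Pi.single l₃ 1 = α ∧
              β = Pi.single l₃ 1 ∧ κ = Pi.single l₂ 1 then
            fderiv ℝ (fderiv ℝ (σ l₁)) y (σ l₂ y) (σ l₃ y)
              + fderiv ℝ (σ l₁) y (fderiv ℝ (σ l₂) y (σ l₃ y))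
          else 0 := by
        have swap1 : ∀ (K : Finset (Fin d → ℕ))
            (G : (Fin d → ℕ) → Fin d → Fin d → Fin d → EuclideanSpace ℝ (Fin m)),
            ∑ κ ∈ K, ∑ l₁ : Fin d, ∑ l₂ : Fin d, ∑ l₃ : Fin d, G κ l₁ l₂ l₃
              = ∑ l₁ : Fin d, ∑ l₂ : Fin d, ∑ l₃ : Fin d, ∑ κ ∈ K, G κ l₁ l₂ l₃ := by
          intro K G
          rw [Finset.sum_comm]
          exact Finset.sum_congr rfl fun l₁ _ => by
            rw [Finset.sum_comm]
            exact Finset.sum_congr rfl fun l₂ _ => Finset.sum_comm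
        exact (Finset.sum_congr rfl fun β _ => swap1 _ _).trans (swap1 (below α) _)
      _ = _ := by
        refine Finset.sum_congr rfl fun l₁ _ => Finset.sum_congr rfl fun l₂ _ =>
          Finset.sum_congr rfl fun l₃ _ => ?_
        by_cases hc : Pi.single l₁ 1 + Pi.single l₂ 1 + Pi.single l₃ 1 = α
        · rw [if_pos hc]
          have hmem3 : (Pi.single l₃ 1 : Fin d → ℕ) ∈ below α := by
            refine mem_below.2 fun i => ?_
            have h1 := congrFun hc i
            simp only [Pi.add_apply] at h1
            omega
          have hmem2 : (Pi.single l₂ 1 : Fin d → ℕ) ∈ below (α - Pi.single l₃ 1) := by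
            refine mem_below.2 fun i => ?_
            have h1 := congrFun hc i
            simp only [Pi.add_apply] at h1
            simp only [Pi.sub_apply]
            omega
          rw [Finset.sum_eq_single_of_mem (Pi.single l₃ 1) hmem3]
          · rw [Finset.sum_eq_single_of_mem (Pi.single l₂ 1) hmem2]
            · rw [if_pos ⟨hc, rfl, rfl⟩]
            · intro b _ hb
              rw [if_neg]
              rintro ⟨-, -, rfl⟩
              exact hb rfl
          · intro b _ hb
            apply Finset.sum_eq_zero
            intro κ _
            rw [if_neg]
            rintro ⟨-, rfl, -⟩
            exact hb rfl
        · rw [if_neg hc]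
          apply Finset.sum_eq_zero
          intro b _
          apply Finset.sum_eq_zero
          intro κ _
          rw [if_neg]
          rintro ⟨h, -, -⟩
          exact hc h
  simp only [hf3 α hα, first, smul_zero, neg_zero, zero_sub, key3, hf1, neg_smul]
end
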